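/- arXiv:2207.06005 — 2 statements merged into one kernel-verified Lean document; each statement's English description precedes it below -/
import Mathlib

section
/- Let G be a group, H ≤ G a subgroup and K ≤ Z^∧(G) a subgroup of the exterior center of G. If G = HK and H ∩ K ≤ Z^∧(H), then M(G) ≅ M(H). -/
/-!
Nonabelian tensor square modulo `q` (Conduché–Ellis / Brown–Loday for `q = 0`),
presented by generators `g ⊗ h` and `{(g,g)}` with the defining relations.
-/

namespace QTensor

/-- Generators of the `q`-tensor square: `t g h` stands for `g ⊗ h`,
and `d g` stands for the symbol `{(g,g)}`. -/
inductive Gen (G : Type) : Type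
  | t : G → G → Gen G
  | d : G → Gen G

variable (G : Type) [Group G]

/-- The word `g ⊗ h` in the free group on the generators. -/
def T (g h : G) : FreeGroup (Gen G) := FreeGroup.of (Gen.t g h)

/-- The word `{(g,g)}` in the free group on the generators. -/
def D (g : G) : FreeGroup (Gen G) := FreeGroup.of (Gen.d g)

/-- The word `∏_{i=1}^{q-1} (g⁻¹ ⊗ (^(g^(1-q+i)) g₁)^i)` appearing in relation (4). -/
def relProd (q : ℕ) (g g₁ : G) : FreeGroup (Gen G) :=
  ((List.range (q - 1)).map (fun j =>
    T G g⁻¹ ((g ^ ((1 : ℤ) - (q : ℤ) + (j + 1 : ℕ)) * g₁ *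
      (g ^ ((1 : ℤ) - (q : ℤ) + (j + 1 : ℕ)))⁻¹) ^ (j + 1)))).prod

/-- The defining relations of the `q`-tensor square.  For `q = 0` the symbols
`{(g,g)}` are killed, so that the group is the Brown–Loday nonabelian tensor
square generated by the `g ⊗ h` subject to relations (1) and (2). -/
def rels (q : ℕ) : Set (FreeGroup (Gen G)) :=
  {r | ∃ g g₁ h : G,
      r = T G (g * g₁) h * (T G (g * g₁ * g⁻¹) (g * h * g⁻¹) * T G g h)⁻¹} ∪
  {r | ∃ g h h₁ : G,
      r = T G g (h * h₁) * (T G g h * T G (h * g * h⁻¹) (h * h₁ * h⁻¹))⁻¹} ∪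
  {r | ∃ g g₁ h₁ : G,
      r = D G g * T G g₁ h₁ * (D G g)⁻¹ *
        (T G (g ^ q * g₁ * (g ^ q)⁻¹) (g ^ q * h₁ * (g ^ q)⁻¹))⁻¹} ∪
  {r | ∃ g g₁ : G,
      r = D G (g * g₁) * (D G g * relProd G q g g₁ * D G g₁)⁻¹} ∪
  {r | ∃ g g₁ : G,
      r = D G g * D G g₁ * (D G g)⁻¹ * (D G g₁)⁻¹ * (T G (g ^ q) (g₁ ^ q))⁻¹} ∪
  {r | ∃ g h : G,
      r = D G (g * h * g⁻¹ * h⁻¹) * ((T G g h) ^ q)⁻¹} ∪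
  {r | q = 0 ∧ ∃ g : G, r = D G g}

/-- The nonabelian tensor square modulo `q`, `G ⊗^q G`. -/
def tensorSquare (q : ℕ) : Type := PresentedGroup (rels G q)

instance (q : ℕ) : Group (tensorSquare G q) := by unfold tensorSquare; infer_instance

/-- The element `g ⊗ h` of `G ⊗^q G`. -/
def tmk (q : ℕ) (g h : G) : tensorSquare G q := PresentedGroup.of (Gen.t g h)

/-- The element `{(g,g)}` of `G ⊗^q G`. -/
def dmk (q : ℕ) (g : G) : tensorSquare G q := PresentedGroup.of (Gen.d g)

/-- `∇^q(G)`, the normal closure of the elements `g ⊗ g` in `G ⊗^q G`. -/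
def nabla (q : ℕ) : Subgroup (tensorSquare G q) :=
  Subgroup.normalClosure {x | ∃ g : G, x = tmk G q g g}

instance (q : ℕ) : (nabla G q).Normal := Subgroup.normalClosure_normal

/-- The exterior square modulo `q`, `G ∧^q G = (G ⊗^q G)/∇^q(G)`. -/
def extSquare (q : ℕ) : Type := tensorSquare G q ⧸ nabla G q

instance (q : ℕ) : Group (extSquare G q) := by unfold extSquare; infer_instance

/-- The element `g ∧ h` of `G ∧^q G`. -/
def wmk (q : ℕ) (g h : G) : extSquare G q := QuotientGroup.mk (tmk G q g h)

/-- The image of the symbol `{(g,g)}` in `G ∧^q G`. -/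
def dwmk (q : ℕ) (g : G) : extSquare G q := QuotientGroup.mk (dmk G q g)

/-- The exterior centre variant `Z^∧_q(G) = {g : g ∧ h = 1 for all h}` (as a set). -/
def Zext (q : ℕ) : Set G := {g | ∀ h : G, wmk G q g h = 1}

/-- `E^∧_q(G) = {g ∈ Z^∧_q(G) : {(g,g)} = 1 in G ∧^q G}` (as a set); for `q = 0`
the second condition is automatic, so `E^∧_0(G) = Z^∧(G)`. -/
def Eext (q : ℕ) : Set G := {g | (∀ h : G, wmk G q g h = 1) ∧ dwmk G q g = 1}

/-- The subgroup `G^q[G,G]` generated by all `q`-th powers and all commutators. -/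
def qPowComm (q : ℕ) : Subgroup G :=
  Subgroup.closure ({x | ∃ g : G, x = g ^ q} ∪ {x | ∃ a b : G, x = a * b * a⁻¹ * b⁻¹})

theorem pow_mem_qPowComm (q : ℕ) (g : G) : g ^ q ∈ qPowComm G q :=
  Subgroup.subset_closure (Or.inl ⟨g, rfl⟩)

theorem commutator_mem_qPowComm (q : ℕ) (a b : G) :
    a * b * a⁻¹ * b⁻¹ ∈ qPowComm G q :=
  Subgroup.subset_closure (Or.inr ⟨a, b, rfl⟩)

open scoped commutatorElement in
theorem mem_commutator (a b : G) : ⁅a, b⁆ ∈ commutator G :=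
  Subgroup.commutator_mem_commutator (Subgroup.mem_top a) (Subgroup.mem_top b)

/-- `M₀^q(G)`: the subgroup of `G ∧^q G` generated by the `x ∧ y` with `[x,y] = 1`.
(It is contained in the `q`-Schur multiplier `M^q(G)`.) -/
def M0 (q : ℕ) : Subgroup (extSquare G q) :=
  Subgroup.closure {x | ∃ a b : G, a * b = b * a ∧ x = wmk G q a b}

/-- `M̂₀^q(G)`: the subgroup of `G ∧^q G` generated by the `x ∧ y` with `[x,y] = 1`
together with the `{(g,g)}` with `g^q = 1`. -/
def M0hat (q : ℕ) : Subgroup (extSquare G q) :=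
  Subgroup.closure
    ({x | ∃ a b : G, a * b = b * a ∧ x = wmk G q a b} ∪
     {x | ∃ g : G, g ^ q = 1 ∧ x = dwmk G q g})

/-- A group `Q` is capable if `Q ≅ E/Z(E)` for some group `E`. -/
def Capable (Q : Type) [Group Q] : Prop :=
  ∃ (E : Type) (_ : Group E), Nonempty (Q ≃* E ⧸ Subgroup.center E)

/-!
The `K`-part of an element never matters. By `η`, elements of `Z^∧(G)` are central, so by the
defining relations `g ∧ g'` depends only on the classes of `g, g'` in `G/K`, and likewise
`a ∧ b` in `H ∧ H` only on the classes of `a, b` modulo `H ∩ K`. As `G = HK`, sending `g ∧ g'`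
to `h ∧ h'` for `H`-factors `h, h'` of `g, g'` is therefore well defined and inverse to the map
`H ∧ H → G ∧ G` induced by the inclusion. This isomorphism commutes with the commutator maps,
so it restricts to the Schur multipliers.
-/

variable {G}

theorem mk_eq_one_of_mem_rels {q : ℕ} {r : FreeGroup (Gen G)} (hr : r ∈ rels G q) :
    PresentedGroup.mk (rels G q) r = 1 :=
  (QuotientGroup.eq_one_iff r).mpr (Subgroup.subset_normalClosure hr)

theorem wmk_mul_left (q : ℕ) (g g₁ h : G) :
    wmk G q (g * g₁) h = wmk G q (g * g₁ * g⁻¹) (g * h * g⁻¹) * wmk G q g h := by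
  have hr := mk_eq_one_of_mem_rels (q := q)
    (Or.inl (Or.inl (Or.inl (Or.inl (Or.inl (Or.inl ⟨g, g₁, h, rfl⟩))))))
  rw [map_mul, map_inv, map_mul] at hr
  exact congrArg QuotientGroup.mk (mul_inv_eq_one.mp hr)

theorem wmk_mul_right (q : ℕ) (g h h₁ : G) :
    wmk G q g (h * h₁) = wmk G q g h * wmk G q (h * g * h⁻¹) (h * h₁ * h⁻¹) := by
  have hr := mk_eq_one_of_mem_rels (q := q)
    (Or.inl (Or.inl (Or.inl (Or.inl (Or.inl (Or.inr ⟨g, h, h₁, rfl⟩))))))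
  rw [map_mul, map_inv, map_mul] at hr
  exact congrArg QuotientGroup.mk (mul_inv_eq_one.mp hr)

theorem wmk_self (q : ℕ) (g : G) : wmk G q g g = 1 :=
  (QuotientGroup.eq_one_iff _).mpr (Subgroup.subset_normalClosure ⟨g, rfl⟩)

theorem dwmk_zero (g : G) : dwmk G 0 g = 1 :=
  congrArg QuotientGroup.mk (mk_eq_one_of_mem_rels (Or.inr ⟨rfl, g, rfl⟩))

theorem inv_wmk (q : ℕ) (g h : G) : (wmk G q g h)⁻¹ = wmk G q h g := by
  -- expand `g x ∧ g x = 1` by the left relation, then simplify both factors by the right one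
  suffices key : ∀ x : G, (wmk G q g (g * x * g⁻¹))⁻¹ = wmk G q (g * x * g⁻¹) g by
    simpa [mul_assoc] using key (g⁻¹ * h * g)
  intro x
  have hgx : wmk G q g (g * x) = wmk G q g (g * x * g⁻¹) := by
    simpa [wmk_self] using wmk_mul_right q g g x
  have hxg : wmk G q (g * x * g⁻¹) (g * (g * x) * g⁻¹) = wmk G q (g * x * g⁻¹) g := by
    have := wmk_mul_right q (g * x * g⁻¹) g (g * x * g⁻¹)
    rw [wmk_self, show g * (g * x * g⁻¹) = g * (g * x) * g⁻¹ by group] at this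
    simpa using this
  have hprod := wmk_mul_left q g x (g * x)
  rw [wmk_self, hxg, hgx] at hprod
  exact inv_eq_of_mul_eq_one_left hprod.symm

theorem mem_center_of_mem_Zext {q : ℕ} (η : extSquare G q →* G)
    (hη : ∀ g h : G, η (wmk G q g h) = g * h * g⁻¹ * h⁻¹) {k : G} (hk : k ∈ Zext G q) :
    k ∈ Subgroup.center G := by
  refine Subgroup.mem_center_iff.mpr fun x => ?_
  have hcomm := hη k x
  rw [hk x, map_one, eq_comm, mul_inv_eq_one, mul_inv_eq_iff_eq_mul] at hcomm
  exact hcomm.symm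

theorem wmk_mul_left_of_mem_Zext {q : ℕ} {k : G} (hk : k ∈ Zext G q)
    (hkc : k ∈ Subgroup.center G) (a b : G) : wmk G q (a * k) b = wmk G q a b := by
  have hconj : a * k * a⁻¹ = k := by rw [Subgroup.mem_center_iff.mp hkc a]; group
  simpa [hconj, hk _] using wmk_mul_left q a k b

theorem wmk_mul_right_of_mem_Zext {q : ℕ} {k : G} (hk : k ∈ Zext G q)
    (hkc : k ∈ Subgroup.center G) (a b : G) : wmk G q a (b * k) = wmk G q a b := by
  rw [← inv_wmk, wmk_mul_left_of_mem_Zext hk hkc, inv_wmk]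

theorem wmk_eq_wmk_of_inv_mul_mem_Zext {q : ℕ} (η : extSquare G q →* G)
    (hη : ∀ g h : G, η (wmk G q g h) = g * h * g⁻¹ * h⁻¹) {a b c d : G}
    (hac : a⁻¹ * c ∈ Zext G q) (hbd : b⁻¹ * d ∈ Zext G q) :
    wmk G q a b = wmk G q c d := by
  rw [← mul_inv_cancel_left a c, ← mul_inv_cancel_left b d,
    wmk_mul_left_of_mem_Zext hac (mem_center_of_mem_Zext η hη hac),
    wmk_mul_right_of_mem_Zext hbd (mem_center_of_mem_Zext η hη hbd)]

section Lift

variable {P : Type*} [Group P]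

structure IsExteriorPairing (f : G → G → P) : Prop where
  mul_left : ∀ g g₁ h, f (g * g₁) h = f (g * g₁ * g⁻¹) (g * h * g⁻¹) * f g h
  mul_right : ∀ g h h₁, f g (h * h₁) = f g h * f (h * g * h⁻¹) (h * h₁ * h⁻¹)
  self : ∀ g, f g g = 1

theorem isExteriorPairing_wmk (q : ℕ) : IsExteriorPairing (wmk G q) :=
  ⟨wmk_mul_left q, wmk_mul_right q, wmk_self q⟩

theorem IsExteriorPairing.comp_hom {H : Type} [Group H] {f : G → G → P}
    (hf : IsExteriorPairing f) (α : H →* G) :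
    IsExteriorPairing (fun a b => f (α a) (α b)) where
  mul_left a a₁ b := by simpa only [map_mul, map_inv] using hf.mul_left (α a) (α a₁) (α b)
  mul_right a b b₁ := by simpa only [map_mul, map_inv] using hf.mul_right (α a) (α b) (α b₁)
  self a := hf.self (α a)

def genImage (f : G → G → P) : Gen G → P
  | Gen.t g h => f g h
  | Gen.d _ => 1

theorem IsExteriorPairing.freeGroupLift_eq_one {f : G → G → P} (hf : IsExteriorPairing f) :
    ∀ r ∈ rels G 0, FreeGroup.lift (genImage f) r = 1 := by
  have hT (g h : G) : FreeGroup.lift (genImage f) (T G g h) = f g h := FreeGroup.lift_apply_of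
  have hD (g : G) : FreeGroup.lift (genImage f) (D G g) = 1 := FreeGroup.lift_apply_of
  have hone (h : G) : f 1 h = 1 := by simpa using hf.mul_left 1 1 h
  rintro r ((((((⟨g, g₁, h, rfl⟩ | ⟨g, h, h₁, rfl⟩) | ⟨g, g₁, h₁, rfl⟩) | ⟨g, g₁, rfl⟩) |
    ⟨g, g₁, rfl⟩) | ⟨g, h, rfl⟩) | ⟨-, g, rfl⟩)
  · simp [hT, hf.mul_left g g₁ h]
  · simp [hT, hf.mul_right g h h₁]
  · simp [hT, hD]
  · simp [relProd, hD]
  · simp [hT, hD, hone]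
  · simp [hD]
  · simp [hD]

def extSquareLift {f : G → G → P} (hf : IsExteriorPairing f) : extSquare G 0 →* P :=
  QuotientGroup.lift (nabla G 0) (PresentedGroup.toGroup hf.freeGroupLift_eq_one) <| by
    refine @Subgroup.normalClosure_le_normal _ _ _ _ (MonoidHom.normal_ker _) ?_
    rintro _ ⟨g, rfl⟩
    exact (PresentedGroup.toGroup.of hf.freeGroupLift_eq_one (x := Gen.t g g)).trans (hf.self g)

@[simp]
theorem extSquareLift_wmk {f : G → G → P} (hf : IsExteriorPairing f) (g h : G) :
    extSquareLift hf (wmk G 0 g h) = f g h :=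
  PresentedGroup.toGroup.of hf.freeGroupLift_eq_one

theorem extSquare_hom_ext {Φ Ψ : extSquare G 0 →* P}
    (h : ∀ g h : G, Φ (wmk G 0 g h) = Ψ (wmk G 0 g h)) : Φ = Ψ := by
  refine QuotientGroup.monoidHom_ext _ (PresentedGroup.ext fun x => ?_)
  cases x with
  | t g h' => exact h g h'
  | d g =>
    show Φ (dwmk G 0 g) = Ψ (dwmk G 0 g)
    rw [dwmk_zero, map_one, map_one]

end Lift

section Product

variable {H K : Subgroup G}

noncomputable def hComponent (hHK : ∀ g : G, ∃ h ∈ H, ∃ k ∈ K, g = h * k) (g : G) : H :=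
  ⟨(hHK g).choose, (hHK g).choose_spec.1⟩

theorem mk_hComponent (hHK : ∀ g : G, ∃ h ∈ H, ∃ k ∈ K, g = h * k) (g : G) :
    ((hComponent hHK g : G) : G ⧸ K) = g := by
  obtain ⟨-, k, hk, hg⟩ := (hHK g).choose_spec
  rwa [QuotientGroup.eq,
    show ((hComponent hHK g : G))⁻¹ * g = k from inv_mul_eq_iff_eq_mul.mpr hg]

theorem IsExteriorPairing.comp_hComponent [K.Normal] {P : Type*} [Group P] {f : H → H → P}
    (hf : IsExteriorPairing f)
    (hfK : ∀ a b c d : H, ((a : G) : G ⧸ K) = c → ((b : G) : G ⧸ K) = d → f a b = f c d)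
    (hHK : ∀ g : G, ∃ h ∈ H, ∃ k ∈ K, g = h * k) :
    IsExteriorPairing (fun g g' => f (hComponent hHK g) (hComponent hHK g')) := by
  set p := hComponent hHK
  have hp {g g' : G} (a b : H) (ha : ((a : G) : G ⧸ K) = g) (hb : ((b : G) : G ⧸ K) = g') :
      f (p g) (p g') = f a b :=
    hfK _ _ _ _ ((mk_hComponent hHK g).trans ha.symm) ((mk_hComponent hHK g').trans hb.symm)
  refine ⟨fun g g₁ h => ?_, fun g h h₁ => ?_, fun g => hf.self (p g)⟩
  · rw [hp (g := g * g₁) (p g * p g₁) (p h),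
      hp (g := g * g₁ * g⁻¹) (p g * p g₁ * (p g)⁻¹) (p g * p h * (p g)⁻¹)]
    exact hf.mul_left _ _ _
    all_goals simp [p, mk_hComponent]
  · rw [hp (g' := h * h₁) (p g) (p h * p h₁),
      hp (g := h * g * h⁻¹) (p h * p g * (p h)⁻¹) (p h * p h₁ * (p h)⁻¹)]
    exact hf.mul_right _ _ _
    all_goals simp [p, mk_hComponent]

end Product

end QTensor

theorem Subgroup.normal_of_le_center {G : Type*} [Group G] {N : Subgroup G}
    (hN : N ≤ Subgroup.center G) : N.Normal where
  conj_mem n hn g := by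
    rwa [Subgroup.mem_center_iff.mp (hN hn) g, mul_inv_cancel_right]

def MulEquiv.kerEquivOfComp {A B C D : Type*} [Group A] [Group B] [Group C] [Group D]
    (e : A ≃* B) {ηA : A →* C} {ηB : B →* D} {j : C →* D} (hj : Function.Injective j)
    (h : ηB.comp (e : A →* B) = j.comp ηA) : ηB.ker ≃* ηA.ker :=
  (e.symm.subgroupMap ηB.ker).trans <| MulEquiv.subgroupCongr <| by
    rw [← MonoidHom.ker_comp_mulEquiv, h, MonoidHom.ker_comp_of_injective _ _ hj]

open QTensor in
/-- If `G = HK` with `K ≤ Z^∧(G)` and `H ∩ K ≤ Z^∧(H)`, then `M(G) ≅ M(H)`. -/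
theorem schurMultiplier_iso_of_product (G : Type) [Group G] (H K : Subgroup G)
    (ηG : extSquare G 0 →* G)
    (hηG : ∀ g h : G, ηG (wmk G 0 g h) = g * h * g⁻¹ * h⁻¹)
    (ηH : extSquare H 0 →* H)
    (hηH : ∀ a b : H, ηH (wmk (↥H) 0 a b) = a * b * a⁻¹ * b⁻¹)
    (hK : (K : Set G) ⊆ Zext G 0)
    (hHK : ∀ g : G, ∃ h ∈ H, ∃ k ∈ K, g = h * k)
    (hHcapK : ∀ x : H, (x : G) ∈ K → x ∈ Zext (↥H) 0) :
    Nonempty (ηG.ker ≃* ηH.ker) := by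
  have : K.Normal :=
    Subgroup.normal_of_le_center fun k hk => mem_center_of_mem_Zext ηG hηG (hK hk)
  have hwG (a b c d : G) (hac : (a : G ⧸ K) = c) (hbd : (b : G ⧸ K) = d) :
      wmk G 0 a b = wmk G 0 c d :=
    wmk_eq_wmk_of_inv_mul_mem_Zext ηG hηG (hK (QuotientGroup.eq.mp hac))
      (hK (QuotientGroup.eq.mp hbd))
  have hwH (a b c d : H) (hac : ((a : G) : G ⧸ K) = c) (hbd : ((b : G) : G ⧸ K) = d) :
      wmk H 0 a b = wmk H 0 c d :=
    wmk_eq_wmk_of_inv_mul_mem_Zext ηH hηH (hHcapK _ (QuotientGroup.eq.mp hac))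
      (hHcapK _ (QuotientGroup.eq.mp hbd))
  let φ := extSquareLift ((isExteriorPairing_wmk 0).comp_hom H.subtype)
  let ψ := extSquareLift ((isExteriorPairing_wmk 0).comp_hComponent hwH hHK)
  have hψφ : ψ.comp φ = .id _ := extSquare_hom_ext fun a b => by
    simpa [φ, ψ] using hwH _ _ _ _ (mk_hComponent hHK a) (mk_hComponent hHK b)
  have hφψ : φ.comp ψ = .id _ := extSquare_hom_ext fun g g' => by
    simpa [φ, ψ] using hwG _ _ _ _ (mk_hComponent hHK g) (mk_hComponent hHK g')
  have hη : ηG.comp φ = H.subtype.comp ηH := extSquare_hom_ext fun a b => by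
    simp [φ, hηG, hηH]
  exact ⟨MulEquiv.kerEquivOfComp (φ.toMulEquiv ψ hψφ hφψ) H.subtype_injective hη⟩
end

section
/- Let q ≥ 0 be an integer. If two groups G and H are q-isoclinic, then B₀^q(G) ≅ B₀^q(H); i.e. the q-Bogomolov multiplier is invariant under q-isoclinism. -/
/-!
Both `q`-Bogomolov multipliers are kernels of maps out of the curly exterior squares
`G ⋏^q G = (G ∧^q G)/M₀^q(G)`: `B₀^q(G) ≅ ker (η̄ : G ⋏^q G → G^q[G,G])`.
In `H ⋏^q H` a central `z` pairs trivially with everything and `{(z,z)}` vanishes for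
`z ∈ Z_q(H)`, so the generators `a ⋏ b` and `{(a,a)}` only depend on `a, b` modulo `Z_q(H)`.
Pulling them back along `α : G/Z_q(G) ≅ H/Z_q(H)` gives a `q`-crossed pairing on `G`; since
`β` matches commutators, it kills `M₀^q(G)`, so the universal property of `G ⊗^q G` yields
`G ⋏^q G → H ⋏^q H`. The maps built from `α` and `α⁻¹` are mutually inverse and intertwine
the two `η̄` with `β`, hence identify their kernels.
-/

namespace QTensor

section Isomorphisms

variable {A B C D : Type*} [Group A] [Group B] [Group C] [Group D]

noncomputable def quotientSubgroupOfKerEquivKer (f : A →* B) (N : Subgroup A) [N.Normal]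
    (g : A ⧸ N →* C) (hg : ∀ a : A, g a = 1 ↔ f a = 1) : f.ker ⧸ N.subgroupOf f.ker ≃* g.ker :=
  let r : f.ker →* g.ker :=
    ((QuotientGroup.mk' N).comp f.ker.subtype).codRestrict g.ker fun x => (hg x).mpr x.2
  have hr : Function.Surjective r := by
    rintro ⟨y, hy⟩
    obtain ⟨a, rfl⟩ := QuotientGroup.mk'_surjective N y
    exact ⟨⟨a, (hg a).mp hy⟩, rfl⟩
  have hker : r.ker = N.subgroupOf f.ker := by
    ext x
    rw [MonoidHom.mem_ker, Subgroup.mem_subgroupOf, ← QuotientGroup.eq_one_iff]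
    exact Subtype.ext_iff
  (QuotientGroup.quotientMulEquivOfEq hker.symm).trans
    (QuotientGroup.quotientKerEquivOfSurjective r hr)

def kerEquivOfComp (E : A ≃* B) {f : A →* C} {g : B →* D} (e : C ≃* D)
    (h : ∀ x, g (E x) = e (f x)) : f.ker ≃* g.ker :=
  (E.subgroupMap f.ker).trans <| MulEquiv.subgroupCongr <| by
    ext y
    obtain ⟨x, rfl⟩ := E.surjective y
    change (E : A →* B) x ∈ _ ↔ _
    rw [Subgroup.mem_map_iff_mem E.injective, MonoidHom.mem_ker, MonoidHom.mem_ker, h,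
      e.map_eq_one_iff]

end Isomorphisms

section Pairing

variable {K K' M M' : Type*} [Group K] [Group K'] [Group M] [Group M']

/-- The product `∏_{i=1}^{q-1} t(g⁻¹, (^(g^{1-q+i}) g₁)^i)` of relation (4). -/
def pairingProd (q : ℕ) (t : K → K → M) (g g₁ : K) : M :=
  ((List.range (q - 1)).map (fun j =>
    t g⁻¹ ((g ^ ((1 : ℤ) - (q : ℤ) + (j + 1 : ℕ)) * g₁ *
      (g ^ ((1 : ℤ) - (q : ℤ) + (j + 1 : ℕ)))⁻¹) ^ (j + 1)))).prod

theorem relProd_eq_pairingProd (G : Type) [Group G] (q : ℕ) (g g₁ : G) :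
    relProd G q g g₁ = pairingProd q (T G) g g₁ := rfl

theorem map_pairingProd (q : ℕ) (t : K → K → M) (f : M →* M') (g g₁ : K) :
    f (pairingProd q t g g₁) = pairingProd q (fun a b => f (t a b)) g g₁ := by
  simp only [pairingProd, map_list_prod, List.map_map, Function.comp_def]

theorem pairingProd_comp (q : ℕ) (t : K → K → M) (φ : K' →* K) (g g₁ : K') :
    pairingProd q t (φ g) (φ g₁) = pairingProd q (fun a b => t (φ a) (φ b)) g g₁ := by
  simp only [pairingProd, map_mul, map_inv, map_pow, map_zpow]

structure IsCrossedPairing (t : K → K → M) : Prop where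
  mul_left : ∀ g g₁ h : K, t (g * g₁) h = t (g * g₁ * g⁻¹) (g * h * g⁻¹) * t g h
  mul_right : ∀ g h h₁ : K, t g (h * h₁) = t g h * t (h * g * h⁻¹) (h * h₁ * h⁻¹)

/-- `t g h` and `d g` satisfy the defining relations (1)–(7) of `g ⊗ h` and `{(g,g)}` in
`K ⊗^q K`, i.e. they are the images of the generators under a homomorphism out of `K ⊗^q K`. -/
structure IsQCrossedPairing (q : ℕ) (t : K → K → M) (d : K → M) : Prop
    extends IsCrossedPairing t where
  conj_d : ∀ g g₁ h₁ : K,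
    d g * t g₁ h₁ * (d g)⁻¹ = t (g ^ q * g₁ * (g ^ q)⁻¹) (g ^ q * h₁ * (g ^ q)⁻¹)
  d_mul : ∀ g g₁ : K, d (g * g₁) = d g * pairingProd q t g g₁ * d g₁
  commutator_d : ∀ g g₁ : K, d g * d g₁ * (d g)⁻¹ * (d g₁)⁻¹ = t (g ^ q) (g₁ ^ q)
  d_commutator : ∀ g h : K, d (g * h * g⁻¹ * h⁻¹) = t g h ^ q
  d_eq_one : q = 0 → ∀ g : K, d g = 1

namespace IsCrossedPairing

variable {t : K → K → M}

theorem conj_eq (h : IsCrossedPairing t) (x y a b : K) :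
    t x y * t a b * (t x y)⁻¹ =
      t (x * y * x⁻¹ * y⁻¹ * a * (x * y * x⁻¹ * y⁻¹)⁻¹)
        (x * y * x⁻¹ * y⁻¹ * b * (x * y * x⁻¹ * y⁻¹)⁻¹) := by
  -- Expanding `t (x * g) (y * k)` by relation (1) first, or by relation (2) first, gives two
  -- words that agree up to this commutation.
  have swap (g k : K) : t (x * y * g * (x * y)⁻¹) (x * y * k * (x * y)⁻¹) * t x y =
      t x y * t (y * x * g * (y * x)⁻¹) (y * x * k * (y * x)⁻¹) := by
    have e₁ : t (x * g) (y * k) = t (x * g * x⁻¹) (x * y * x⁻¹) *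
        (t (x * y * g * (x * y)⁻¹) (x * y * k * (x * y)⁻¹) * t x y) *
          t (y * x * y⁻¹) (y * k * y⁻¹) := by
      rw [h.mul_left x g (y * k), show x * (y * k) * x⁻¹ = x * y * x⁻¹ * (x * k * x⁻¹) by group,
        h.mul_right (x * g * x⁻¹) (x * y * x⁻¹), h.mul_right x y k,
        show x * y * x⁻¹ * (x * g * x⁻¹) * (x * y * x⁻¹)⁻¹ = x * y * g * (x * y)⁻¹ by group,
        show x * y * x⁻¹ * (x * k * x⁻¹) * (x * y * x⁻¹)⁻¹ = x * y * k * (x * y)⁻¹ by group]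
      simp only [mul_assoc]
    have e₂ : t (x * g) (y * k) = t (x * g * x⁻¹) (x * y * x⁻¹) *
        (t x y * t (y * x * g * (y * x)⁻¹) (y * x * k * (y * x)⁻¹)) *
          t (y * x * y⁻¹) (y * k * y⁻¹) := by
      rw [h.mul_right (x * g) y k, h.mul_left x g y,
        show y * (x * g) * y⁻¹ = y * x * y⁻¹ * (y * g * y⁻¹) by group,
        h.mul_left (y * x * y⁻¹) (y * g * y⁻¹),
        show y * x * y⁻¹ * (y * g * y⁻¹) * (y * x * y⁻¹)⁻¹ = y * x * g * (y * x)⁻¹ by group,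
        show y * x * y⁻¹ * (y * k * y⁻¹) * (y * x * y⁻¹)⁻¹ = y * x * k * (y * x)⁻¹ by group]
      simp only [mul_assoc]
    exact mul_left_cancel (mul_right_cancel (e₁.symm.trans e₂))
  have key := swap ((y * x)⁻¹ * a * (y * x)) ((y * x)⁻¹ * b * (y * x))
  rw [show y * x * ((y * x)⁻¹ * a * (y * x)) * (y * x)⁻¹ = a by group,
    show y * x * ((y * x)⁻¹ * b * (y * x)) * (y * x)⁻¹ = b by group,
    ← eq_mul_inv_iff_mul_eq] at key
  rw [← key]
  congr 1 <;> group

theorem apply_mul_central_left (h : IsCrossedPairing t)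
    (h1 : ∀ a b : K, Commute a b → t a b = 1) {z : K} (hz : z ∈ Subgroup.center K) (a b : K) :
    t (a * z) b = t a b := by
  have hz' := Subgroup.mem_center_iff.mp hz
  rw [h.mul_left, show a * z * a⁻¹ = z by rw [hz' a]; group, h1 _ _ (hz' _).symm, one_mul]

theorem apply_mul_central_right (h : IsCrossedPairing t)
    (h1 : ∀ a b : K, Commute a b → t a b = 1) {z : K} (hz : z ∈ Subgroup.center K) (a b : K) :
    t a (b * z) = t a b := by
  have hz' := Subgroup.mem_center_iff.mp hz
  rw [h.mul_right, show b * z * b⁻¹ = z by rw [hz' b]; group, h1 _ _ (hz' _), mul_one]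

theorem apply_eq_of_mk_eq (h : IsCrossedPairing t) (h1 : ∀ a b : K, Commute a b → t a b = 1)
    {N : Subgroup K} (hN : N ≤ Subgroup.center K) {a a' b b' : K}
    (ha : (a : K ⧸ N) = a') (hb : (b : K ⧸ N) = b') : t a b = t a' b' := by
  rw [← mul_inv_cancel_left a a', ← mul_inv_cancel_left b b',
    h.apply_mul_central_left h1 (hN (QuotientGroup.eq.mp ha)),
    h.apply_mul_central_right h1 (hN (QuotientGroup.eq.mp hb))]

end IsCrossedPairing

namespace IsQCrossedPairing

variable {q : ℕ} {t : K → K → M} {d : K → M}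

theorem map (h : IsQCrossedPairing q t d) (f : M →* M') :
    IsQCrossedPairing q (fun a b => f (t a b)) (fun a => f (d a)) where
  mul_left g g₁ h' := by simp only [h.mul_left g g₁ h', map_mul]
  mul_right g h' h₁ := by simp only [h.mul_right g h' h₁, map_mul]
  conj_d g g₁ h₁ := by simp only [← h.conj_d g g₁ h₁, map_mul, map_inv]
  d_mul g g₁ := by simp only [h.d_mul g g₁, map_mul, map_pairingProd]
  commutator_d g g₁ := by simp only [← h.commutator_d g g₁, map_mul, map_inv]
  d_commutator g h' := by simp only [h.d_commutator g h', map_pow]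
  d_eq_one hq g := by simp only [h.d_eq_one hq g, map_one]

theorem comp (h : IsQCrossedPairing q t d) (φ : K' →* K) :
    IsQCrossedPairing q (fun a b => t (φ a) (φ b)) (fun a => d (φ a)) where
  mul_left g g₁ h' := by simpa only [map_mul, map_inv] using h.mul_left (φ g) (φ g₁) (φ h')
  mul_right g h' h₁ := by simpa only [map_mul, map_inv] using h.mul_right (φ g) (φ h') (φ h₁)
  conj_d g g₁ h₁ := by
    simpa only [map_mul, map_inv, map_pow] using h.conj_d (φ g) (φ g₁) (φ h₁)
  d_mul g g₁ := by simpa only [map_mul, pairingProd_comp] using h.d_mul (φ g) (φ g₁)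
  commutator_d g g₁ := by simpa only [map_pow] using h.commutator_d (φ g) (φ g₁)
  d_commutator g h' := by simpa only [map_mul, map_inv] using h.d_commutator (φ g) (φ h')
  d_eq_one hq g := h.d_eq_one hq (φ g)

theorem of_comp {φ : K' →* K} (hφ : Function.Surjective φ)
    (h : IsQCrossedPairing q (fun a b => t (φ a) (φ b)) (fun a => d (φ a))) :
    IsQCrossedPairing q t d where
  mul_left := hφ.forall₃.mpr fun a b c => by
    simpa only [map_mul, map_inv] using h.mul_left a b c
  mul_right := hφ.forall₃.mpr fun a b c => by
    simpa only [map_mul, map_inv] using h.mul_right a b c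
  conj_d := hφ.forall₃.mpr fun a b c => by
    simpa only [map_mul, map_inv, map_pow] using h.conj_d a b c
  d_mul := hφ.forall₂.mpr fun a b => by
    simpa only [map_mul, pairingProd_comp] using h.d_mul a b
  commutator_d := hφ.forall₂.mpr fun a b => by
    simpa only [map_pow] using h.commutator_d a b
  d_commutator := hφ.forall₂.mpr fun a b => by
    simpa only [map_mul, map_inv] using h.d_commutator a b
  d_eq_one hq := hφ.forall.mpr (h.d_eq_one hq)

theorem d_mul_central (h : IsQCrossedPairing q t d) (h1 : ∀ a b : K, Commute a b → t a b = 1)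
    {z : K} (hz : z ∈ Subgroup.center K) (hdz : d z = 1) (a : K) : d (a * z) = d a := by
  have hprod : pairingProd q t a z = 1 := by
    refine List.prod_eq_one fun x hx => ?_
    obtain ⟨j, -, rfl⟩ := List.mem_map.mp hx
    refine h1 _ _ (Subgroup.mem_center_iff.mp (pow_mem ?_ _) a⁻¹)
    exact (Subgroup.center K).normal_of_characteristic.conj_mem z hz _
  rw [h.d_mul, hprod, hdz, mul_one, mul_one]

theorem d_eq_of_mk_eq (h : IsQCrossedPairing q t d) (h1 : ∀ a b : K, Commute a b → t a b = 1)
    {N : Subgroup K} (hN : ∀ z ∈ N, z ∈ Subgroup.center K ∧ d z = 1)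
    {a a' : K} (ha : (a : K ⧸ N) = a') : d a = d a' := by
  have hz := hN _ (QuotientGroup.eq.mp ha)
  rw [← mul_inv_cancel_left a a', h.d_mul_central h1 hz.1 hz.2]

theorem quotient (h : IsQCrossedPairing q t d) (h1 : ∀ a b : K, Commute a b → t a b = 1)
    {N : Subgroup K} [N.Normal] (hN : ∀ z ∈ N, z ∈ Subgroup.center K ∧ d z = 1) :
    IsQCrossedPairing q (fun x y : K ⧸ N => t x.out y.out) (fun x => d x.out) := by
  refine of_comp (QuotientGroup.mk'_surjective N) ?_
  convert h using 1
  · funext a b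
    exact h.apply_eq_of_mk_eq h1 (fun z hz => (hN z hz).1) (by simp) (by simp)
  · funext a
    exact h.d_eq_of_mk_eq h1 hN (by simp)

end IsQCrossedPairing

end Pairing

section TensorSquare

variable {G : Type} [Group G] {q : ℕ}

def tensorMk (G : Type) [Group G] (q : ℕ) : FreeGroup (Gen G) →* tensorSquare G q :=
  PresentedGroup.mk (rels G q)

theorem tensorMk_T (g h : G) : tensorMk G q (T G g h) = tmk G q g h := rfl

theorem tensorMk_D (g : G) : tensorMk G q (D G g) = dmk G q g := rfl

theorem isQCrossedPairing_tmk : IsQCrossedPairing q (tmk G q) (dmk G q) := by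
  have rel {a b : FreeGroup (Gen G)} (h : a * b⁻¹ ∈ rels G q) :
      tensorMk G q a = tensorMk G q b :=
    PresentedGroup.mk_eq_mk_of_mul_inv_mem h
  refine ⟨⟨fun g g₁ h => ?_, fun g h h₁ => ?_⟩, fun g g₁ h₁ => ?_, fun g g₁ => ?_,
    fun g g₁ => ?_, fun g h => ?_, fun hq g => ?_⟩
  · simpa only [map_mul, tensorMk_T] using
      rel (Or.inl (Or.inl (Or.inl (Or.inl (Or.inl (Or.inl ⟨g, g₁, h, rfl⟩))))))
  · simpa only [map_mul, tensorMk_T] using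
      rel (Or.inl (Or.inl (Or.inl (Or.inl (Or.inl (Or.inr ⟨g, h, h₁, rfl⟩))))))
  · simpa only [map_mul, map_inv, tensorMk_T, tensorMk_D] using
      rel (Or.inl (Or.inl (Or.inl (Or.inl (Or.inr ⟨g, g₁, h₁, rfl⟩)))))
  · simpa only [map_mul, tensorMk_D, tensorMk_T, relProd_eq_pairingProd, map_pairingProd] using
      rel (Or.inl (Or.inl (Or.inl (Or.inr ⟨g, g₁, rfl⟩))))
  · simpa only [map_mul, map_inv, tensorMk_T, tensorMk_D] using
      rel (Or.inl (Or.inl (Or.inr ⟨g, g₁, rfl⟩)))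
  · simpa only [map_pow, tensorMk_T, tensorMk_D] using rel (Or.inl (Or.inr ⟨g, h, rfl⟩))
  · exact PresentedGroup.one_of_mem (Or.inr ⟨hq, g, rfl⟩)

variable {M : Type*} [Group M] {t : G → G → M} {d : G → M}

def IsQCrossedPairing.lift (h : IsQCrossedPairing q t d) : tensorSquare G q →* M :=
  PresentedGroup.toGroup (f := fun | .t a b => t a b | .d a => d a) <| by
    rintro r ((((((⟨g, g₁, h', rfl⟩ | ⟨g, h', h₁, rfl⟩) | ⟨g, g₁, h₁, rfl⟩) | ⟨g, g₁, rfl⟩) |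
      ⟨g, g₁, rfl⟩) | ⟨g, h', rfl⟩) | ⟨hq, g, rfl⟩) <;>
    simp only [map_mul, map_inv, map_pow, T, D, FreeGroup.lift_apply_of, relProd_eq_pairingProd,
      map_pairingProd, mul_inv_eq_one]
    exacts [h.mul_left g g₁ h', h.mul_right g h' h₁, h.conj_d g g₁ h₁, h.d_mul g g₁,
      h.commutator_d g g₁, h.d_commutator g h', h.d_eq_one hq g]

theorem IsQCrossedPairing.lift_tmk (h : IsQCrossedPairing q t d) (g g' : G) :
    h.lift (tmk G q g g') = t g g' :=
  PresentedGroup.toGroup.of _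

theorem IsQCrossedPairing.lift_dmk (h : IsQCrossedPairing q t d) (g : G) :
    h.lift (dmk G q g) = d g :=
  PresentedGroup.toGroup.of _

theorem isQCrossedPairing_wmk : IsQCrossedPairing q (wmk G q) (dwmk G q) :=
  isQCrossedPairing_tmk.map (QuotientGroup.mk' (nabla G q))

theorem closure_wmk_dwmk :
    Subgroup.closure ({x | ∃ g h : G, x = wmk G q g h} ∪ {x | ∃ g : G, x = dwmk G q g}) = ⊤ := by
  let π : FreeGroup (Gen G) →* extSquare G q := (QuotientGroup.mk' (nabla G q)).comp (tensorMk G q)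
  have hπ : Function.Surjective π :=
    (QuotientGroup.mk'_surjective _).comp (PresentedGroup.mk_surjective _)
  rw [← Subgroup.map_top_of_surjective π hπ, ← FreeGroup.closure_range_of, MonoidHom.map_closure]
  congr 1
  ext x
  constructor
  · rintro (⟨g, h, rfl⟩ | ⟨g, rfl⟩)
    exacts [⟨_, ⟨Gen.t g h, rfl⟩, rfl⟩, ⟨_, ⟨Gen.d g, rfl⟩, rfl⟩]
  · rintro ⟨-, ⟨⟨g, h⟩ | g, rfl⟩, rfl⟩
    exacts [Or.inl ⟨g, h, rfl⟩, Or.inr ⟨g, rfl⟩]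

theorem conj_mem_M0 {u : extSquare G q} {c : G}
    (hu : ∀ a b : G, u * wmk G q a b * u⁻¹ = wmk G q (c * a * c⁻¹) (c * b * c⁻¹))
    {n : extSquare G q} (hn : n ∈ M0 G q) : u * n * u⁻¹ ∈ M0 G q := by
  have hle : M0 G q ≤ (M0 G q).comap (MulAut.conj u).toMonoidHom := by
    refine (Subgroup.closure_le _).mpr ?_
    rintro _ ⟨a, b, hab, rfl⟩
    simp only [SetLike.mem_coe, Subgroup.mem_comap, MulEquiv.coe_toMonoidHom, MulAut.conj_apply,
      hu]
    exact Subgroup.subset_closure ⟨_, _, Commute.map hab (MulAut.conj c).toMonoidHom, rfl⟩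
  exact hle hn

theorem mem_normalizer_M0 {u : extSquare G q} (c : G)
    (hu : ∀ a b : G, u * wmk G q a b * u⁻¹ = wmk G q (c * a * c⁻¹) (c * b * c⁻¹)) :
    u ∈ Subgroup.normalizer (M0 G q : Set (extSquare G q)) := by
  have hu' (a b : G) :
      u⁻¹ * wmk G q a b * u⁻¹⁻¹ = wmk G q (c⁻¹ * a * c⁻¹⁻¹) (c⁻¹ * b * c⁻¹⁻¹) := by
    conv_lhs => rw [← (show c * (c⁻¹ * a * c⁻¹⁻¹) * c⁻¹ = a by group),
      ← (show c * (c⁻¹ * b * c⁻¹⁻¹) * c⁻¹ = b by group), ← hu]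
    group
  refine Subgroup.mem_normalizer_iff.mpr fun n => ⟨conj_mem_M0 hu, fun hn => ?_⟩
  simpa [mul_assoc] using conj_mem_M0 hu' hn

instance M0_normal : (M0 G q).Normal := by
  rw [← Subgroup.normalizer_eq_top_iff, eq_top_iff, ← closure_wmk_dwmk, Subgroup.closure_le]
  rintro _ (⟨x, y, rfl⟩ | ⟨x, rfl⟩)
  · exact mem_normalizer_M0 _ (isQCrossedPairing_wmk.conj_eq x y)
  · exact mem_normalizer_M0 _ (isQCrossedPairing_wmk.conj_d x)

abbrev curlyExtSquare (G : Type) [Group G] (q : ℕ) : Type := extSquare G q ⧸ M0 G q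

def curlyWmk (G : Type) [Group G] (q : ℕ) (g h : G) : curlyExtSquare G q := (wmk G q g h : _)

def curlyDwmk (G : Type) [Group G] (q : ℕ) (g : G) : curlyExtSquare G q := (dwmk G q g : _)

theorem isQCrossedPairing_curlyWmk : IsQCrossedPairing q (curlyWmk G q) (curlyDwmk G q) :=
  isQCrossedPairing_wmk.map (QuotientGroup.mk' (M0 G q))

theorem curlyWmk_eq_one {a b : G} (h : Commute a b) : curlyWmk G q a b = 1 :=
  (QuotientGroup.eq_one_iff _).mpr (Subgroup.subset_closure ⟨a, b, h, rfl⟩)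

theorem curlyDwmk_eq_one {g : G} (h : dwmk G q g ∈ M0 G q) : curlyDwmk G q g = 1 :=
  (QuotientGroup.eq_one_iff _).mpr h

theorem curlyExtSquare.hom_ext {f f' : curlyExtSquare G q →* M}
    (hw : ∀ g h : G, f (curlyWmk G q g h) = f' (curlyWmk G q g h))
    (hd : ∀ g : G, f (curlyDwmk G q g) = f' (curlyDwmk G q g)) : f = f' := by
  refine QuotientGroup.monoidHom_ext _ (MonoidHom.eq_of_eqOn_dense closure_wmk_dwmk ?_)
  rintro _ (⟨g, h, rfl⟩ | ⟨g, rfl⟩)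
  exacts [hw g h, hd g]

def IsQCrossedPairing.curlyLift (h : IsQCrossedPairing q t d)
    (h1 : ∀ a b : G, Commute a b → t a b = 1) : curlyExtSquare G q →* M :=
  QuotientGroup.lift (M0 G q)
    (QuotientGroup.lift (nabla G q) h.lift <| Subgroup.normalClosure_le_normal <| by
      rintro _ ⟨g, rfl⟩
      exact (h.lift_tmk g g).trans (h1 g g (Commute.refl g))) <| (Subgroup.closure_le _).mpr <| by
      rintro _ ⟨a, b, hab, rfl⟩
      exact (h.lift_tmk a b).trans (h1 a b hab)

theorem IsQCrossedPairing.curlyLift_curlyWmk (h : IsQCrossedPairing q t d)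
    (h1 : ∀ a b : G, Commute a b → t a b = 1) (g g' : G) :
    h.curlyLift h1 (curlyWmk G q g g') = t g g' :=
  h.lift_tmk g g'

theorem IsQCrossedPairing.curlyLift_curlyDwmk (h : IsQCrossedPairing q t d)
    (h1 : ∀ a b : G, Commute a b → t a b = 1) (g : G) :
    h.curlyLift h1 (curlyDwmk G q g) = d g :=
  h.lift_dmk g

end TensorSquare

section Transfer

variable {G H : Type} [Group G] [Group H] {q : ℕ} {Z : Subgroup H} [Z.Normal]
  (hZ : ∀ z ∈ Z, z ∈ Subgroup.center H ∧ dwmk H q z ∈ M0 H q) (φ : G →* H ⧸ Z)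
  (hφ : ∀ a b : G, Commute a b → ∀ a' b' : H, φ a = a' → φ b = b' → Commute a' b')

include hZ in
theorem isQCrossedPairing_curlyWmk_out :
    IsQCrossedPairing q (fun g h => curlyWmk H q (φ g).out (φ h).out)
      (fun g => curlyDwmk H q (φ g).out) :=
  (isQCrossedPairing_curlyWmk.quotient (fun _ _ => curlyWmk_eq_one)
    fun z hz => ⟨(hZ z hz).1, curlyDwmk_eq_one (hZ z hz).2⟩).comp φ

noncomputable def curlyTransfer : curlyExtSquare G q →* curlyExtSquare H q :=
  (isQCrossedPairing_curlyWmk_out hZ φ).curlyLift fun a b hab =>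
    curlyWmk_eq_one (hφ a b hab _ _ (by simp) (by simp))

theorem curlyTransfer_curlyWmk {g h : G} {a b : H} (ha : φ g = a) (hb : φ h = b) :
    curlyTransfer hZ φ hφ (curlyWmk G q g h) = curlyWmk H q a b := by
  rw [curlyTransfer, IsQCrossedPairing.curlyLift_curlyWmk]
  refine isQCrossedPairing_curlyWmk.apply_eq_of_mk_eq (fun _ _ => curlyWmk_eq_one)
    (fun z hz => (hZ z hz).1) ?_ ?_ <;> simp [ha, hb]

theorem curlyTransfer_curlyDwmk {g : G} {a : H} (ha : φ g = a) :
    curlyTransfer hZ φ hφ (curlyDwmk G q g) = curlyDwmk H q a := by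
  rw [curlyTransfer, IsQCrossedPairing.curlyLift_curlyDwmk]
  refine isQCrossedPairing_curlyWmk.d_eq_of_mk_eq (fun _ _ => curlyWmk_eq_one)
    (fun z hz => ⟨(hZ z hz).1, curlyDwmk_eq_one (hZ z hz).2⟩) ?_
  simp [ha]

theorem curlyTransfer_comp_curlyTransfer {Z' : Subgroup G} [Z'.Normal]
    (hZ' : ∀ z ∈ Z', z ∈ Subgroup.center G ∧ dwmk G q z ∈ M0 G q) (ψ : H →* G ⧸ Z')
    (hψ : ∀ a b : H, Commute a b → ∀ a' b' : G, ψ a = a' → ψ b = b' → Commute a' b')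
    (hψφ : ∀ (g : G) (a : H), φ g = a → ψ a = g) :
    (curlyTransfer hZ' ψ hψ).comp (curlyTransfer hZ φ hφ) = MonoidHom.id _ := by
  have hlift (g : G) : φ g = (φ g).out := (QuotientGroup.out_eq' _).symm
  refine curlyExtSquare.hom_ext (fun g h => ?_) (fun g => ?_) <;>
    simp only [MonoidHom.comp_apply, MonoidHom.id_apply]
  · rw [curlyTransfer_curlyWmk hZ φ hφ (hlift g) (hlift h),
      curlyTransfer_curlyWmk hZ' ψ hψ (hψφ _ _ (hlift g)) (hψφ _ _ (hlift h))]
  · rw [curlyTransfer_curlyDwmk hZ φ hφ (hlift g),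
      curlyTransfer_curlyDwmk hZ' ψ hψ (hψφ _ _ (hlift g))]

end Transfer

section Eta

variable {G : Type} [Group G] {q : ℕ} (η : extSquare G q →* G)
  (hη₁ : ∀ g h : G, η (wmk G q g h) = g * h * g⁻¹ * h⁻¹) (hη₂ : ∀ g : G, η (dwmk G q g) = g ^ q)

include hη₁ hη₂ in
theorem range_le_qPowComm : η.range ≤ qPowComm G q := by
  rw [MonoidHom.range_eq_map, ← closure_wmk_dwmk, MonoidHom.map_closure, Subgroup.closure_le]
  rintro _ ⟨_, ⟨g, h, rfl⟩ | ⟨g, rfl⟩, rfl⟩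
  · rw [SetLike.mem_coe, hη₁]
    exact commutator_mem_qPowComm G q g h
  · rw [SetLike.mem_coe, hη₂]
    exact pow_mem_qPowComm G q g

def etaBar : curlyExtSquare G q →* qPowComm G q :=
  QuotientGroup.lift (M0 G q)
    (η.codRestrict _ fun x => range_le_qPowComm η hη₁ hη₂ ⟨x, rfl⟩) <|
    (Subgroup.closure_le _).mpr <| by
      rintro _ ⟨a, b, hab, rfl⟩
      exact Subtype.ext (by simp [hη₁, hab])

theorem etaBar_curlyWmk (g h : G) :
    etaBar η hη₁ hη₂ (curlyWmk G q g h) = ⟨_, commutator_mem_qPowComm G q g h⟩ :=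
  Subtype.ext (hη₁ g h)

theorem etaBar_curlyDwmk (g : G) :
    etaBar η hη₁ hη₂ (curlyDwmk G q g) = ⟨_, pow_mem_qPowComm G q g⟩ :=
  Subtype.ext (hη₂ g)

end Eta

theorem etaBar_comp_curlyTransfer {G H : Type} [Group G] [Group H] {q : ℕ} {Z : Subgroup H}
    [Z.Normal] (hZ : ∀ z ∈ Z, z ∈ Subgroup.center H ∧ dwmk H q z ∈ M0 H q) (φ : G →* H ⧸ Z)
    (hφ : ∀ a b : G, Commute a b → ∀ a' b' : H, φ a = a' → φ b = b' → Commute a' b')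
    (ηG : extSquare G q →* G) (hηG₁ : ∀ g h : G, ηG (wmk G q g h) = g * h * g⁻¹ * h⁻¹)
    (hηG₂ : ∀ g : G, ηG (dwmk G q g) = g ^ q)
    (ηH : extSquare H q →* H) (hηH₁ : ∀ g h : H, ηH (wmk H q g h) = g * h * g⁻¹ * h⁻¹)
    (hηH₂ : ∀ g : H, ηH (dwmk H q g) = g ^ q) (β : qPowComm G q →* qPowComm H q)
    (hβ : ∀ (a₁ b₁ : G) (a₂ b₂ : H), φ a₁ = a₂ → φ b₁ = b₂ →
      (β ⟨a₁ * b₁ * a₁⁻¹ * b₁⁻¹, commutator_mem_qPowComm G q a₁ b₁⟩ : H)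
        = a₂ * b₂ * a₂⁻¹ * b₂⁻¹ ∧ (β ⟨a₁ ^ q, pow_mem_qPowComm G q a₁⟩ : H) = a₂ ^ q) :
    (etaBar ηH hηH₁ hηH₂).comp (curlyTransfer hZ φ hφ) = β.comp (etaBar ηG hηG₁ hηG₂) := by
  have hlift (g : G) : φ g = (φ g).out := (QuotientGroup.out_eq' _).symm
  refine curlyExtSquare.hom_ext (fun g h => Subtype.ext ?_) (fun g => Subtype.ext ?_) <;>
    simp only [MonoidHom.comp_apply]
  · rw [curlyTransfer_curlyWmk hZ φ hφ (hlift g) (hlift h), etaBar_curlyWmk, etaBar_curlyWmk]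
    exact (hβ g h _ _ (hlift g) (hlift h)).1.symm
  · rw [curlyTransfer_curlyDwmk hZ φ hφ (hlift g), etaBar_curlyDwmk, etaBar_curlyDwmk]
    exact (hβ g g _ _ (hlift g) (hlift g)).2.symm

theorem commute_iff_of_commutator_eq {G H : Type} [Group G] [Group H] {q : ℕ}
    (β : qPowComm G q ≃* qPowComm H q) {a₁ b₁ : G} {a₂ b₂ : H}
    (h : (β ⟨a₁ * b₁ * a₁⁻¹ * b₁⁻¹, commutator_mem_qPowComm G q a₁ b₁⟩ : H)
      = a₂ * b₂ * a₂⁻¹ * b₂⁻¹) :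
    Commute a₁ b₁ ↔ Commute a₂ b₂ := by
  rw [← commutatorElement_eq_one_iff_commute, ← commutatorElement_eq_one_iff_commute,
    commutatorElement_def, commutatorElement_def, ← h, OneMemClass.coe_eq_one,
    MulEquiv.map_eq_one_iff, ← OneMemClass.coe_eq_one]

end QTensor

open QTensor in
/-- Invariance of the `q`-Bogomolov multiplier `B₀^q = M^q/M₀^q` under
`q`-isoclinism.  Here `M^q(G) = ker ηG` (with `ηG : G ∧^q G → G` given by its
defining properties), `M₀^q(G)` is generated by the `x ∧ y` with `[x,y] = 1`,
and `Z_q(G) = {g ∈ Z(G) : {(g,g)} ∈ M₀^q(G)}`. -/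
theorem qBogomolov_iso_of_qIsoclinic (q : ℕ) (G H : Type) [Group G] [Group H]
    (ηG : extSquare G q →* G)
    (hηG1 : ∀ g h : G, ηG (wmk G q g h) = g * h * g⁻¹ * h⁻¹)
    (hηG2 : ∀ g : G, ηG (dwmk G q g) = g ^ q)
    (ηH : extSquare H q →* H)
    (hηH1 : ∀ g h : H, ηH (wmk H q g h) = g * h * g⁻¹ * h⁻¹)
    (hηH2 : ∀ g : H, ηH (dwmk H q g) = g ^ q)
    [((M0 G q).subgroupOf ηG.ker).Normal] [((M0 H q).subgroupOf ηH.ker).Normal]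
    -- the subgroups `Z_q`:
    (ZqG : Subgroup G) [ZqG.Normal]
    (hZqG : (ZqG : Set G) = {g | g ∈ Subgroup.center G ∧ dwmk G q g ∈ M0 G q})
    (ZqH : Subgroup H) [ZqH.Normal]
    (hZqH : (ZqH : Set H) = {g | g ∈ Subgroup.center H ∧ dwmk H q g ∈ M0 H q})
    -- q-isoclinism data:
    (α : (G ⧸ ZqG) ≃* (H ⧸ ZqH)) (β : qPowComm G q ≃* qPowComm H q)
    (hαβ : ∀ (a₁ b₁ : G) (a₂ b₂ : H),
      α (QuotientGroup.mk a₁) = QuotientGroup.mk a₂ →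
      α (QuotientGroup.mk b₁) = QuotientGroup.mk b₂ →
      ((β ⟨a₁ * b₁ * a₁⁻¹ * b₁⁻¹, commutator_mem_qPowComm G q a₁ b₁⟩ : qPowComm H q) : H)
          = a₂ * b₂ * a₂⁻¹ * b₂⁻¹ ∧
      ((β ⟨a₁ ^ q, pow_mem_qPowComm G q a₁⟩ : qPowComm H q) : H) = a₂ ^ q) :
    Nonempty ((ηG.ker ⧸ (M0 G q).subgroupOf ηG.ker) ≃*
              (ηH.ker ⧸ (M0 H q).subgroupOf ηH.ker)) := by
  have hZG (z : G) (hz : z ∈ ZqG) : z ∈ Subgroup.center G ∧ dwmk G q z ∈ M0 G q :=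
    Set.ext_iff.mp hZqG z |>.mp hz
  have hZH (z : H) (hz : z ∈ ZqH) : z ∈ Subgroup.center H ∧ dwmk H q z ∈ M0 H q :=
    Set.ext_iff.mp hZqH z |>.mp hz
  let φ : G →* H ⧸ ZqH := α.toMonoidHom.comp (QuotientGroup.mk' ZqG)
  let ψ : H →* G ⧸ ZqG := α.symm.toMonoidHom.comp (QuotientGroup.mk' ZqH)
  have hψ (a : H) (g : G) : ψ a = g ↔ φ g = a := α.symm_apply_eq.trans eq_comm
  have hcommG (a b : G) (hab : Commute a b) (a' b' : H) (ha : φ a = a') (hb : φ b = b') :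
      Commute a' b' :=
    (commute_iff_of_commutator_eq β (hαβ a b a' b' ha hb).1).mp hab
  have hcommH (a b : H) (hab : Commute a b) (a' b' : G) (ha : ψ a = a') (hb : ψ b = b') :
      Commute a' b' :=
    (commute_iff_of_commutator_eq β
      (hαβ a' b' a b ((hψ a a').mp ha) ((hψ b b').mp hb)).1).mpr hab
  let E : curlyExtSquare G q ≃* curlyExtSquare H q := MonoidHom.toMulEquiv
    (curlyTransfer hZH φ hcommG) (curlyTransfer hZG ψ hcommH)
    (curlyTransfer_comp_curlyTransfer _ _ _ _ _ _ fun g a => (hψ a g).mpr)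
    (curlyTransfer_comp_curlyTransfer _ _ _ _ _ _ fun a g => (hψ a g).mp)
  have hE := etaBar_comp_curlyTransfer hZH φ hcommG ηG hηG1 hηG2 ηH hηH1 hηH2 β.toMonoidHom hαβ
  have eG := quotientSubgroupOfKerEquivKer ηG (M0 G q) (etaBar ηG hηG1 hηG2) fun _ =>
    Subtype.ext_iff
  have eH := quotientSubgroupOfKerEquivKer ηH (M0 H q) (etaBar ηH hηH1 hηH2) fun _ =>
    Subtype.ext_iff
  exact ⟨eG.trans ((kerEquivOfComp E β (DFunLike.congr_fun hE)).trans eH.symm)⟩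
end
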